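/- arXiv:2012.06684 — 2 statements merged into one kernel-verified Lean document; each statement's English description precedes it below -/
import Mathlib

section
/- Let d, m be natural numbers with d + m ≥ 1, and let A, C be d×d complex matrices and D an m×d complex matrix. Let M be the (d+d+m)×(d+d+m) block lower-triangular matrix whose diagonal blocks are -A, Aᵀ, and the m×m zero matrix, whose (2,1) block is C, whose (3,2) block is D, and whose remaining blocks zero. Then there exists an eigenvalue λ of M with Re(λ) ≥ 0; in particular, M is not Hurwitz stable (it is not the case that every eigenvalue of M has negative real part). -/
/-!
The spectrum of a block triangular matrix is the union of the spectra of its diagonal blocks, so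
the spectrum of `backpropMatrix A C D` is `-σ(A) ∪ σ(A)`, together with `0` when `m ≥ 1`.
If `m ≥ 1` the eigenvalue `0` has real part `0`; otherwise `d ≥ 1`, `A` has an eigenvalue `μ`,
and one of `μ`, `-μ` has nonnegative real part.
-/

open Matrix

/-- The linearization of the combined Neural ODE backpropagation process
`ψ(t) = [x(t), α(t), g(t)]`: a block lower-triangular matrix with diagonal blocks
`-A`, `Aᵀ` and the `m × m` zero matrix, with `(2,1)` block `C` and `(3,2)` block `D`. -/
noncomputable def backpropMatrix {d m : ℕ} (A C : Matrix (Fin d) (Fin d) ℂ)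
    (D : Matrix (Fin m) (Fin d) ℂ) :
    Matrix ((Fin d ⊕ Fin d) ⊕ Fin m) ((Fin d ⊕ Fin d) ⊕ Fin m) ℂ :=
  Matrix.fromBlocks (Matrix.fromBlocks (-A) 0 C Aᵀ) 0 (Matrix.fromCols 0 D) 0

namespace Matrix

variable {R : Type*} [CommRing R] {m n : Type*} [Fintype m] [Fintype n] [DecidableEq m]
  [DecidableEq n]

theorem spectrum_transpose (A : Matrix n n R) : spectrum R Aᵀ = spectrum R A := by
  ext μ
  simp only [mem_spectrum_iff_not_isUnit_eval_charpoly, charpoly_transpose]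

theorem spectrum_fromBlocks_zero₁₂ (A : Matrix m m R) (B : Matrix n m R) (D : Matrix n n R) :
    spectrum R (fromBlocks A 0 B D) = spectrum R A ∪ spectrum R D := by
  ext μ
  simp only [Set.mem_union, mem_spectrum_iff_not_isUnit_eval_charpoly, charpoly_fromBlocks_zero₁₂,
    Polynomial.eval_mul, IsUnit.mul_iff, not_and_or]

end Matrix

theorem spectrum_backpropMatrix {d m : ℕ} (A C : Matrix (Fin d) (Fin d) ℂ)
    (D : Matrix (Fin m) (Fin d) ℂ) :
    spectrum ℂ (backpropMatrix A C D) =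
      (-spectrum ℂ A ∪ spectrum ℂ A) ∪ spectrum ℂ (0 : Matrix (Fin m) (Fin m) ℂ) := by
  rw [backpropMatrix, spectrum_fromBlocks_zero₁₂, spectrum_fromBlocks_zero₁₂, spectrum.neg_eq,
    spectrum_transpose]

theorem Complex.exists_mem_neg_union_zero_le_re {s : Set ℂ} (hs : s.Nonempty) :
    ∃ z ∈ -s ∪ s, 0 ≤ z.re := by
  obtain ⟨μ, hμ⟩ := hs
  rcases le_total 0 μ.re with h | h
  · exact ⟨μ, .inr hμ, h⟩
  · exact ⟨-μ, .inl (by simpa using hμ), by simpa using h⟩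

theorem backprop_not_hurwitz {d m : ℕ} (hdm : 1 ≤ d + m)
    (A C : Matrix (Fin d) (Fin d) ℂ) (D : Matrix (Fin m) (Fin d) ℂ) :
    (∃ lam ∈ spectrum ℂ (backpropMatrix A C D), 0 ≤ lam.re) ∧
      ¬ (∀ lam ∈ spectrum ℂ (backpropMatrix A C D), lam.re < 0) := by
  obtain ⟨lam, hlam, hre⟩ : ∃ lam ∈ spectrum ℂ (backpropMatrix A C D), 0 ≤ lam.re := by
    rw [spectrum_backpropMatrix]
    rcases Nat.eq_zero_or_pos m with rfl | hm
    · have : Nonempty (Fin d) := ⟨⟨0, by omega⟩⟩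
      obtain ⟨z, hz, hre⟩ := Complex.exists_mem_neg_union_zero_le_re
        (spectrum.nonempty_of_isAlgClosed_of_finiteDimensional ℂ A)
      exact ⟨z, .inl hz, hre⟩
    · have : Nonempty (Fin m) := ⟨⟨0, hm⟩⟩
      exact ⟨0, .inr (by simp [spectrum.zero_eq]), le_rfl⟩
  exact ⟨⟨lam, hlam, hre⟩, fun h => (h lam hlam).not_ge hre⟩
end

section
/- Let d ≥ 1 and let M be a d×d real matrix such that every complex eigenvalue λ of M (that is, every element of the spectrum of M viewed as a complex matrix) satisfies Re(λ) < 0. Then the system is exponentially stable: there exist constants C > 0 and ε > 0 such that for all t ≥ 0, the operator norm of the matrix exponential exp(t·M) satisfies ‖exp(t·M)‖ ≤ C·exp(-ε·t). In particular, for every initial condition x₀, exp(t·M)·x₀ → 0 as t → ∞. -/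
/-!
On the generalized eigenspace of an eigenvalue `μ`, `exp (t A) = exp (t μ) • ∑_{j < k} t^j/j! (A - μ)^j`
because the exponential series of `t (A - μ)` terminates there; the factor `exp (t Re μ)` beats the
polynomial, so every orbit decays like `exp (-ε t)` once `Re μ < -ε` for all eigenvalues. Over `ℂ` the
generalized eigenspaces span, and the uniform boundedness principle turns these orbitwise bounds
into a bound on the operator norm. A real matrix is handled through its complexification, whose
`L²` operator norm is at least as large.
-/

open Matrix Filter
open scoped Matrix.Norms.L2Operator
open NormedSpace Nat

theorem mem_eball_radius_expSeries (𝕂 : Type*) {𝔸 : Type*} [RCLike 𝕂] [NormedRing 𝔸]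
    [NormedAlgebra 𝕂 𝔸] (x : 𝔸) : x ∈ Metric.eball (0 : 𝔸) (expSeries 𝕂 𝔸).radius := by
  simp [expSeries_radius_eq_top]

theorem Real.pow_div_factorial_le_exp_mul_div_pow {δ t : ℝ} (hδ : 0 < δ) (ht : 0 ≤ t) (j : ℕ) :
    t ^ j / j ! ≤ Real.exp (δ * t) / δ ^ j := by
  rw [le_div_iff₀ (pow_pos hδ j)]
  calc t ^ j / j ! * δ ^ j = (δ * t) ^ j / j ! := by ring
    _ ≤ _ := Real.pow_div_factorial_le_exp _ (mul_nonneg hδ.le ht) j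

theorem Set.Finite.exists_pos_forall_re_lt_neg {s : Set ℂ} (hs : s.Finite)
    (h : ∀ z ∈ s, z.re < 0) : ∃ ε > 0, ∀ z ∈ s, z.re < -ε := by
  have hsmall : ∀ᶠ ε in nhdsWithin (0 : ℝ) (Set.Ioi 0), 0 < ε ∧ ∀ z ∈ s, z.re < -ε :=
    eventually_mem_nhdsWithin.and <| (eventually_all_finite hs).2 fun z hz => nhdsWithin_le_nhds <|
      (continuous_neg.tendsto' 0 0 neg_zero).eventually (lt_mem_nhds (h z hz))
  exact hsmall.exists

theorem tendsto_zero_of_norm_le_mul_exp_neg {E : Type*} [SeminormedAddCommGroup E] {f : ℝ → E}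
    {C ε : ℝ} (hε : 0 < ε) (hf : ∀ t, 0 ≤ t → ‖f t‖ ≤ C * Real.exp (-ε * t)) :
    Tendsto f atTop (nhds 0) := by
  refine squeeze_zero_norm' ((eventually_ge_atTop 0).mono hf) ?_
  simpa using (Real.tendsto_exp_atBot.comp
    (tendsto_id.const_mul_atTop_of_neg (neg_neg_of_pos hε))).const_mul C

section GeneralizedEigenvector

variable {𝕜 E : Type*} [RCLike 𝕜] [NormedAddCommGroup E] [NormedSpace 𝕜 E] [CompleteSpace E]

theorem exp_smul_apply_eq_of_pow_sub_smul_apply_eq_zero (f : E →L[𝕜] E) {μ : 𝕜} {k : ℕ}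
    {v : E} (hv : ((f - μ • 1) ^ k) v = 0) (z : 𝕜) :
    exp (z • f) v =
      exp (z * μ) • ∑ j ∈ Finset.range k, (z ^ j / j !) • ((f - μ • 1) ^ j) v := by
  set N := f - μ • 1
  have hsplit : z • f = algebraMap 𝕜 (E →L[𝕜] E) (z * μ) + z • N := by
    rw [Algebra.algebraMap_eq_smul_one, smul_sub, mul_smul]; abel
  have hterm (j : ℕ) : ((j ! : 𝕜)⁻¹ • (z • N) ^ j) v = (z ^ j / j !) • (N ^ j) v := by
    rw [smul_pow, smul_smul, _root_.smul_apply, inv_mul_eq_div]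
  have hN : exp (z • N) v = ∑ j ∈ Finset.range k, (z ^ j / j !) • (N ^ j) v := by
    refine HasSum.unique (((exp_series_hasSum_exp' (𝕂 := 𝕜) (z • N)).mapL
      (ContinuousLinearMap.apply 𝕜 E v)).congr_fun fun j => (hterm j).symm) ?_
    refine hasSum_sum_of_ne_finset_zero fun j hj => ?_
    obtain ⟨i, rfl⟩ := Nat.exists_eq_add_of_le' (not_lt.1 (Finset.mem_range.not.1 hj))
    simp [pow_add, hv]
  rw [hsplit, exp_add_of_commute_of_mem_ball (Algebra.commutes _ _)
      (mem_eball_radius_expSeries 𝕜 _) (mem_eball_radius_expSeries 𝕜 _),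
    ← algebraMap_exp_comm, mul_apply_eq_comp, hN, Algebra.algebraMap_eq_smul_one,
    _root_.smul_apply, one_apply_eq_self]

end GeneralizedEigenvector

section ExpDecay

variable {E : Type*} [NormedAddCommGroup E] [NormedSpace ℂ E] [CompleteSpace E]

theorem norm_exp_ofReal_smul_apply_le_of_pow_sub_smul_apply_eq_zero (f : E →L[ℂ] E) {μ : ℂ}
    {k : ℕ} {v : E} (hv : ((f - μ • 1) ^ k) v = 0) {t : ℝ} (ht : 0 ≤ t) :
    ‖exp ((t : ℂ) • f) v‖ ≤
      Real.exp (t * μ.re) * ∑ j ∈ Finset.range k, t ^ j / j ! * ‖((f - μ • 1) ^ j) v‖ := by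
  rw [exp_smul_apply_eq_of_pow_sub_smul_apply_eq_zero f hv, ← Complex.exp_eq_exp_ℂ, norm_smul,
    Complex.norm_exp, Complex.re_ofReal_mul]
  gcongr
  refine (norm_sum_le _ _).trans_eq (Finset.sum_congr rfl fun j _ => ?_)
  rw [norm_smul, norm_div, norm_pow, Complex.norm_real, Real.norm_of_nonneg ht,
    Complex.norm_natCast]

def expDecaySubmodule (f : E →L[ℂ] E) (ε : ℝ) : Submodule ℂ E where
  carrier := {v | ∃ C, ∀ t : ℝ, 0 ≤ t → ‖exp ((t : ℂ) • f) v‖ ≤ C * Real.exp (-ε * t)}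
  zero_mem' := ⟨0, fun t _ => by simp⟩
  add_mem' := by
    rintro v w ⟨C, hC⟩ ⟨D, hD⟩
    refine ⟨C + D, fun t ht => ?_⟩
    rw [map_add, add_mul]
    exact (norm_add_le _ _).trans (add_le_add (hC t ht) (hD t ht))
  smul_mem' := by
    rintro c v ⟨C, hC⟩
    refine ⟨‖c‖ * C, fun t ht => ?_⟩
    rw [map_smul, norm_smul, mul_assoc]
    exact mul_le_mul_of_nonneg_left (hC t ht) (norm_nonneg c)

theorem mem_expDecaySubmodule_of_pow_sub_smul_apply_eq_zero (f : E →L[ℂ] E) {ε : ℝ} {μ : ℂ}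
    (hμ : μ.re < -ε) {k : ℕ} {v : E} (hv : ((f - μ • 1) ^ k) v = 0) :
    v ∈ expDecaySubmodule f ε := by
  set δ := -ε - μ.re
  have hδ : 0 < δ := sub_pos.2 hμ
  refine ⟨∑ j ∈ Finset.range k, ‖((f - μ • 1) ^ j) v‖ / δ ^ j, fun t ht => ?_⟩
  calc ‖exp ((t : ℂ) • f) v‖
      ≤ Real.exp (t * μ.re) * ∑ j ∈ Finset.range k, t ^ j / j ! * ‖((f - μ • 1) ^ j) v‖ :=
        norm_exp_ofReal_smul_apply_le_of_pow_sub_smul_apply_eq_zero f hv ht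
    _ ≤ Real.exp (t * μ.re) *
          ∑ j ∈ Finset.range k, Real.exp (δ * t) / δ ^ j * ‖((f - μ • 1) ^ j) v‖ := by
        gcongr _ * ∑ _ ∈ _, ?_ * _ with j
        exact Real.pow_div_factorial_le_exp_mul_div_pow hδ ht j
    _ = (∑ j ∈ Finset.range k, ‖((f - μ • 1) ^ j) v‖ / δ ^ j) * Real.exp (-ε * t) := by
        rw [Finset.mul_sum, Finset.sum_mul]
        refine Finset.sum_congr rfl fun j _ => ?_
        rw [show -ε * t = t * μ.re + δ * t by ring, Real.exp_add]
        ring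

theorem expDecaySubmodule_eq_top [FiniteDimensional ℂ E] (f : E →L[ℂ] E) {ε : ℝ}
    (h : ∀ μ ∈ spectrum ℂ f, μ.re < -ε) : expDecaySubmodule f ε = ⊤ := by
  rw [eq_top_iff, ← Module.End.iSup_maxGenEigenspace_eq_top (f : Module.End ℂ E), iSup_le_iff]
  intro μ v hv
  obtain ⟨k, hk⟩ := (Module.End.mem_maxGenEigenspace _ μ v).1 hv
  rcases eq_or_ne v 0 with rfl | hv0
  · exact zero_mem _
  have hμ : μ ∈ spectrum ℂ f := by
    rw [ContinuousLinearMap.spectrum_eq]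
    exact (Module.End.hasEigenvalue_of_hasGenEigenvalue (k := k)
      (Module.End.HasUnifEigenvector.hasUnifEigenvalue
        ⟨Module.End.mem_genEigenspace_nat.2 hk, hv0⟩)).mem_spectrum
  rw [← ContinuousLinearMap.toLinearMap_one, ← ContinuousLinearMap.toLinearMap_smul,
    ← ContinuousLinearMap.toLinearMap_sub, ← ContinuousLinearMap.toLinearMap_pow] at hk
  exact mem_expDecaySubmodule_of_pow_sub_smul_apply_eq_zero f (h μ hμ) hk

theorem exists_norm_exp_smul_le_of_forall_re_lt [FiniteDimensional ℂ E] (f : E →L[ℂ] E) {ε : ℝ}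
    (h : ∀ μ ∈ spectrum ℂ f, μ.re < -ε) :
    ∃ C, ∀ t : ℝ, 0 ≤ t → ‖exp ((t : ℂ) • f)‖ ≤ C * Real.exp (-ε * t) := by
  let g : Set.Ici (0 : ℝ) → E →L[ℂ] E := fun t => (Real.exp (ε * t) : ℂ) • exp ((t : ℂ) • f)
  have hnorm_exp (t : ℝ) : ‖(Real.exp (ε * t) : ℂ)‖ = Real.exp (ε * t) := by
    rw [Complex.norm_real, Real.norm_of_nonneg (Real.exp_nonneg _)]
  have hg_bdd (v : E) : ∃ C, ∀ t, ‖g t v‖ ≤ C := by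
    obtain ⟨C, hC⟩ : v ∈ expDecaySubmodule f ε := expDecaySubmodule_eq_top f h ▸ Submodule.mem_top
    refine ⟨C, fun t => ?_⟩
    calc ‖g t v‖ = Real.exp (ε * t) * ‖exp ((t : ℂ) • f) v‖ := by
          rw [_root_.smul_apply, norm_smul, hnorm_exp]
      _ ≤ Real.exp (ε * t) * (C * Real.exp (-ε * t)) := by gcongr; exact hC t t.2
      _ = C := by
          rw [mul_left_comm, ← Real.exp_add, neg_mul, add_neg_cancel, Real.exp_zero, mul_one]
  obtain ⟨C, hC⟩ := banach_steinhaus hg_bdd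
  refine ⟨C, fun t ht => ?_⟩
  have hgt := hC ⟨t, ht⟩
  rw [norm_smul, hnorm_exp] at hgt
  rwa [neg_mul, Real.exp_neg, ← div_eq_mul_inv, le_div_iff₀ (Real.exp_pos _), mul_comm]

end ExpDecay

namespace Matrix

variable {m n : Type*} [Fintype m] [Fintype n] [DecidableEq n]

theorem l2_opNorm_le_l2_opNorm_map_ofReal (A : Matrix m n ℝ) :
    ‖A‖ ≤ ‖A.map ((↑) : ℝ → ℂ)‖ := by
  rw [l2_opNorm_def]
  refine ContinuousLinearMap.opNorm_le_bound _ (norm_nonneg _) fun x => ?_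
  set xc := (EuclideanSpace.equiv n ℂ).symm (((↑) : ℝ → ℂ) ∘ x.ofLp)
  have hmul : A.map ((↑) : ℝ → ℂ) *ᵥ xc.ofLp = ((↑) : ℝ → ℂ) ∘ (A *ᵥ x.ofLp) :=
    funext fun i => (RingHom.map_mulVec Complex.ofRealHom A x.ofLp i).symm
  calc ‖((toEuclideanLin ≪≫ₗ LinearMap.toContinuousLinearMap) A) x‖
      = ‖(EuclideanSpace.equiv m ℂ).symm (A.map ((↑) : ℝ → ℂ) *ᵥ xc.ofLp)‖ := by
        simp [hmul, EuclideanSpace.norm_eq]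
    _ ≤ ‖A.map ((↑) : ℝ → ℂ)‖ * ‖xc‖ := l2_opNorm_mulVec _ _
    _ = ‖A.map ((↑) : ℝ → ℂ)‖ * ‖x‖ := by simp [xc, EuclideanSpace.norm_eq]

theorem map_ofReal_exp (A : Matrix n n ℝ) :
    (exp A).map ((↑) : ℝ → ℂ) = exp (A.map ((↑) : ℝ → ℂ)) :=
  map_exp_of_mem_ball (Complex.ofRealHom.mapMatrix : Matrix n n ℝ →+* Matrix n n ℂ)
    (continuous_id.matrix_map Complex.continuous_ofReal) A (mem_eball_radius_expSeries ℝ A)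

theorem toEuclideanCLM_exp (A : Matrix n n ℂ) :
    toEuclideanCLM (n := n) (𝕜 := ℂ) (exp A) = exp (toEuclideanCLM (n := n) (𝕜 := ℂ) A) :=
  map_exp_of_mem_ball _ (AddMonoidHomClass.isometry_of_norm _ fun _ => rfl).continuous A
    (mem_eball_radius_expSeries ℂ A)

theorem exists_norm_exp_smul_le_of_forall_re_lt (A : Matrix n n ℂ) {ε : ℝ}
    (h : ∀ μ ∈ spectrum ℂ A, μ.re < -ε) :
    ∃ C, ∀ t : ℝ, 0 ≤ t → ‖exp ((t : ℂ) • A)‖ ≤ C * Real.exp (-ε * t) := by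
  have hspec : spectrum ℂ (toEuclideanCLM (n := n) (𝕜 := ℂ) A) = spectrum ℂ A :=
    AlgEquiv.spectrum_eq (toEuclideanCLM (n := n) (𝕜 := ℂ)).toAlgEquiv A
  obtain ⟨C, hC⟩ := _root_.exists_norm_exp_smul_le_of_forall_re_lt _ (hspec ▸ h)
  refine ⟨C, fun t ht => ?_⟩
  rw [cstar_norm_def, toEuclideanCLM_exp, map_smul]
  exact hC t ht

theorem exists_norm_exp_real_smul_le_of_forall_re_lt (M : Matrix n n ℝ) {ε : ℝ}
    (h : ∀ μ ∈ spectrum ℂ (M.map ((↑) : ℝ → ℂ)), μ.re < -ε) :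
    ∃ C, ∀ t : ℝ, 0 ≤ t → ‖exp (t • M)‖ ≤ C * Real.exp (-ε * t) := by
  obtain ⟨C, hC⟩ := exists_norm_exp_smul_le_of_forall_re_lt _ h
  refine ⟨C, fun t ht => (l2_opNorm_le_l2_opNorm_map_ofReal _).trans ?_⟩
  have hmap : (t • M).map ((↑) : ℝ → ℂ) = (t : ℂ) • M.map (↑) := by ext; simp
  rw [map_ofReal_exp, hmap]
  exact hC t ht

end Matrix

theorem hurwitz_exp_stable_general {d : ℕ} (M : Matrix (Fin d) (Fin d) ℝ)
    (h : ∀ lam ∈ spectrum ℂ (M.map (Complex.ofReal : ℝ → ℂ)), lam.re < 0) :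
    ∃ C > (0 : ℝ), ∃ ε > (0 : ℝ),
      (∀ t : ℝ, 0 ≤ t → ‖NormedSpace.exp (t • M)‖ ≤ C * Real.exp (-ε * t)) ∧
      ∀ x₀ : Fin d → ℝ,
        Tendsto (fun t : ℝ => NormedSpace.exp (t • M) *ᵥ x₀) atTop (nhds 0) := by
  obtain ⟨ε, hε, hspec⟩ := (finite_spectrum _).exists_pos_forall_re_lt_neg h
  obtain ⟨C, hC⟩ := M.exists_norm_exp_real_smul_le_of_forall_re_lt hspec
  have hdecay (t : ℝ) (ht : 0 ≤ t) : ‖exp (t • M)‖ ≤ max C 1 * Real.exp (-ε * t) :=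
    (hC t ht).trans (by gcongr; exact le_max_left C 1)
  refine ⟨max C 1, lt_max_of_lt_right one_pos, ε, hε, hdecay, fun x₀ => ?_⟩
  exact ((continuous_id.matrix_mulVec continuous_const).tendsto' 0 0 (zero_mulVec x₀)).comp
    (tendsto_zero_of_norm_le_mul_exp_neg hε hdecay)

theorem hurwitz_exp_stable {d : ℕ} (hd : 1 ≤ d) (M : Matrix (Fin d) (Fin d) ℝ)
    (h : ∀ lam ∈ spectrum ℂ (M.map (Complex.ofReal : ℝ → ℂ)), lam.re < 0) :
    ∃ C > (0 : ℝ), ∃ ε > (0 : ℝ),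
      (∀ t : ℝ, 0 ≤ t → ‖NormedSpace.exp (t • M)‖ ≤ C * Real.exp (-ε * t)) ∧
      ∀ x₀ : Fin d → ℝ,
        Tendsto (fun t : ℝ => NormedSpace.exp (t • M) *ᵥ x₀) atTop (nhds 0) :=
  hurwitz_exp_stable_general M h
end
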